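/- Let M be a countable 2-level poset whose comparability graph is connected and locally 2-arc-transitive, and suppose that for every x ∈ Min(M) and y ∈ Max(M) with x < y the interval [x,y]^{M^+} is order-isomorphic to 1 + ℤ + 1. Then ↑Ram(M) = ↓Ram(M) = M^+ \ M = M^D \ M; in particular M^+ = M^D and no element of M is a ramification point of M. -/

import Mathlib

set_option autoImplicit false

section Preamble

/-- A *cut* of a poset `M`: a nonempty subset, bounded above, which equals the set of
lower bounds of its set of upper bounds. -/
def IsCut {M : Type*} [PartialOrder M] (J : Set M) : Prop :=
  J.Nonempty ∧ (upperBounds J).Nonempty ∧ lowerBounds (upperBounds J) = J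

/-- The Dedekind–MacNeille completion of `M`: the set of cuts, ordered by inclusion. -/
abbrev DMC (M : Type*) [PartialOrder M] : Type _ := {J : Set M // IsCut J}

/-- The canonical embedding of `M` into `DMC M`, `a ↦ {x | x ≤ a}`. -/
def principalCut {M : Type*} [PartialOrder M] (a : M) : DMC M :=
  ⟨Set.Iic a, ⟨a, le_refl a⟩, ⟨a, fun _ hx => hx⟩, by
    apply Set.Subset.antisymm
    · intro x hx
      exact hx (fun _ hy => hy)
    · exact subset_lowerBounds_upperBounds _⟩

/-- The image of `M` in its Dedekind–MacNeille completion (the principal cuts). -/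
def principalSet (M : Type*) [PartialOrder M] : Set (DMC M) :=
  Set.range (fun a : M => principalCut a)

/-- A 2-level poset: every element is minimal or maximal. -/
def IsTwoLevel (M : Type*) [PartialOrder M] : Prop :=
  ∀ x : M, IsMin x ∨ IsMax x

/-- The set `Min(M)` of minimal elements. -/
def minSet (M : Type*) [PartialOrder M] : Set M := {x | IsMin x}

/-- The set `Max(M)` of maximal elements. -/
def maxSet (M : Type*) [PartialOrder M] : Set M := {x | IsMax x}

/-- The comparability graph of a poset: `x` adjacent to `y` iff `x < y` or `y < x`. -/
def compGraph (M : Type*) [PartialOrder M] : SimpleGraph M where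
  Adj x y := x < y ∨ y < x
  symm := ⟨fun _ _ h => Or.symm h⟩
  loopless := ⟨fun x h => by rcases h with h | h <;> exact lt_irrefl x h⟩

/-- Upward ramification points of `M`: infima in `DMC M` of two incomparable elements of `M`. -/
def upRam (M : Type*) [PartialOrder M] : Set (DMC M) :=
  {p | ∃ a b : M, ¬ a ≤ b ∧ ¬ b ≤ a ∧ IsGLB {principalCut a, principalCut b} p}

/-- Downward ramification points of `M`: suprema in `DMC M` of two incomparable elements of `M`. -/
def downRam (M : Type*) [PartialOrder M] : Set (DMC M) :=
  {p | ∃ a b : M, ¬ a ≤ b ∧ ¬ b ≤ a ∧ IsLUB {principalCut a, principalCut b} p}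

/-- `M⁺ = M ∪ Ram(M)`, as a subset of `DMC M`. -/
def MPlus (M : Type*) [PartialOrder M] : Set (DMC M) :=
  principalSet M ∪ upRam M ∪ downRam M

/-- A 2-arc in a graph. -/
def IsTwoArc {V : Type*} (G : SimpleGraph V) (v₀ v₁ v₂ : V) : Prop :=
  G.Adj v₀ v₁ ∧ G.Adj v₁ v₂ ∧ v₀ ≠ v₂

/-- Local 1-arc-transitivity: every vertex stabilizer is transitive on neighbours. -/
def LocallyOneArcTransitive {V : Type*} (G : SimpleGraph V) : Prop :=
  ∀ v u w : V, G.Adj v u → G.Adj v w → ∃ g : G ≃g G, g v = v ∧ g u = w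

/-- Local 2-arc-transitivity: every vertex stabilizer is transitive on 2-arcs from that vertex. -/
def LocallyTwoArcTransitive {V : Type*} (G : SimpleGraph V) : Prop :=
  ∀ v u₁ w₁ u₂ w₂ : V, IsTwoArc G v u₁ w₁ → IsTwoArc G v u₂ w₂ →
    ∃ g : G ≃g G, g v = v ∧ g u₁ = u₂ ∧ g w₁ = w₂

/-- (Global) 1-arc-transitivity of a graph. -/
def OneArcTransitive {V : Type*} (G : SimpleGraph V) : Prop :=
  ∀ v₀ v₁ u₀ u₁ : V, G.Adj v₀ v₁ → G.Adj u₀ u₁ →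
    ∃ g : G ≃g G, g v₀ = u₀ ∧ g v₁ = u₁

/-- (Global) 2-arc-transitivity of a graph. -/
def TwoArcTransitive {V : Type*} (G : SimpleGraph V) : Prop :=
  ∀ v₀ v₁ v₂ u₀ u₁ u₂ : V, IsTwoArc G v₀ v₁ v₂ → IsTwoArc G u₀ u₁ u₂ →
    ∃ g : G ≃g G, g v₀ = u₀ ∧ g v₁ = u₁ ∧ g v₂ = u₂

/-- 3-CS-homogeneity: every isomorphism between connected 3-element induced subposets
extends to an automorphism. -/
def ThreeCSHomogeneous (M : Type*) [PartialOrder M] : Prop :=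
  ∀ A B : Set M, A.ncard = 3 → B.ncard = 3 →
    ((compGraph M).induce A).Connected → ((compGraph M).induce B).Connected →
    ∀ f : ↥A ≃o ↥B, ∃ g : M ≃o M, ∀ a : ↥A, g ↑a = ↑(f a)

/-- 2-CS-transitivity: the automorphism group is transitive on comparable pairs. -/
def TwoCSTransitive (M : Type*) [PartialOrder M] : Prop :=
  ∀ a b a' b' : M, a < b → a' < b' → ∃ g : M ≃o M, g a = a' ∧ g b = b'

/-- 3-CS-transitivity: for any two isomorphic connected 3-element induced subposets there
is an automorphism carrying one onto the other. -/
def ThreeCSTransitive (M : Type*) [PartialOrder M] : Prop :=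
  ∀ A B : Set M, A.ncard = 3 → B.ncard = 3 →
    ((compGraph M).induce A).Connected → ((compGraph M).induce B).Connected →
    Nonempty (↥A ≃o ↥B) → ∃ g : M ≃o M, ⇑g '' A = B

/-- A subset of a poset is a `k`-diamond if it consists of a least element, a greatest
element, and exactly `k` pairwise incomparable elements strictly in between. -/
def IsKDiamond {P : Type*} [PartialOrder P] (s : Set P) (k : ℕ) : Prop :=
  ∃ a b : P, a ∈ s ∧ b ∈ s ∧ a ≠ b ∧ (∀ z ∈ s, a ≤ z ∧ z ≤ b) ∧
    (s \ {a, b}).ncard = k ∧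
    ∀ z ∈ s \ ({a, b} : Set P), ∀ w ∈ s \ ({a, b} : Set P), z ≠ w → ¬ z ≤ w

end Preamble

/-!
Since every interval `[x, y]^{M⁺}` is a copy of `1 + ℤ + 1`, no comparable pair `x < y` is a
covering pair in `M^D`; in a 2-level poset this puts every edge `x < y` of the comparability graph
on a 4-cycle `x < y > x' < y' > x`. If `c` were the supremum of incomparable `a, b`, take such a
4-cycle through `a < c`: an automorphism fixing `a` and `c` and moving `b` to `a'` carries the
upper bound `y' ≠ c` of `a, a'` back to an upper bound of `a, b` other than `c`. Dually, `c` is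
no infimum, so `M ∩ Ram(M) = ∅`.

Conversely, let `J` be a non-principal cut, `x₁ ∈ J` and `y₀` an upper bound of `J`. The joins
`x₁ ∨ x` (`x ∈ J`) lie in the chain `[x₁, y₀]^{M⁺} ≅ 1 + ℤ + 1` and stay below the meet of `y₀`
with a second upper bound of `J`, hence below a non-top element; so one of them is largest, and
it is `J`. Thus `J ∈ ↓Ram(M)`, and dually `J ∈ ↑Ram(M)`.
-/

open Set

section Cuts

variable {M : Type*} [PartialOrder M]

lemma Iic_subset_of_mem_cut {J : DMC M} {x : M} (hx : x ∈ J.val) : Iic x ⊆ J.val := by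
  rw [← J.2.2.2]
  exact fun z hz u hu => hz.trans (hu hx)

lemma principalCut_le_iff {a : M} {J : DMC M} : principalCut a ≤ J ↔ a ∈ J.val :=
  ⟨fun h => h le_rfl, Iic_subset_of_mem_cut⟩

lemma le_principalCut_iff {J : DMC M} {u : M} : J ≤ principalCut u ↔ u ∈ upperBounds J.val :=
  Iff.rfl

lemma principalCut_le_principalCut {a b : M} : principalCut a ≤ principalCut b ↔ a ≤ b :=
  principalCut_le_iff

lemma principalCut_lt_principalCut {a b : M} : principalCut a < principalCut b ↔ a < b := by
  simp only [lt_iff_le_not_ge, principalCut_le_principalCut]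

lemma isCut_lowerBounds {T : Set M} (hT : T.Nonempty) (hlb : (lowerBounds T).Nonempty) :
    IsCut (lowerBounds T) :=
  ⟨hlb, hT.mono (subset_upperBounds_lowerBounds T),
    gc_upperBounds_lowerBounds.u_l_u_eq_u (OrderDual.toDual T)⟩

lemma isGLB_image_principalCut_iff {s : Set M} {J : DMC M} :
    IsGLB (principalCut '' s) J ↔ J.val = lowerBounds s := by
  constructor
  · intro h
    ext z
    rw [← principalCut_le_iff]
    refine ⟨fun hz a ha => principalCut_le_principalCut.1 (hz.trans (h.1 ⟨a, ha, rfl⟩)),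
      fun hz => h.2 ?_⟩
    rintro _ ⟨a, ha, rfl⟩
    exact principalCut_le_principalCut.2 (hz ha)
  · intro h
    refine ⟨?_, fun K hK z hz => ?_⟩
    · rintro _ ⟨a, ha, rfl⟩ z hz
      rw [h] at hz
      exact hz ha
    · rw [h]
      exact fun a ha => hK ⟨a, ha, rfl⟩ hz

lemma isLUB_image_principalCut_iff {s : Set M} {J : DMC M} :
    IsLUB (principalCut '' s) J ↔ upperBounds J.val = upperBounds s := by
  constructor
  · intro h
    ext u
    rw [← le_principalCut_iff]
    refine ⟨fun hu a ha => principalCut_le_principalCut.1 ((h.1 ⟨a, ha, rfl⟩).trans hu),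
      fun hu => h.2 ?_⟩
    rintro _ ⟨a, ha, rfl⟩
    exact principalCut_le_principalCut.2 (hu ha)
  · intro h
    have hsJ : s ⊆ J.val := by
      rw [← J.2.2.2, h]
      exact subset_lowerBounds_upperBounds s
    refine ⟨?_, fun K hK => ?_⟩
    · rintro _ ⟨a, ha, rfl⟩
      exact principalCut_le_iff.2 (hsJ ha)
    · have hsK : s ⊆ K.val := fun a ha => principalCut_le_iff.1 (hK ⟨a, ha, rfl⟩)
      show J.val ⊆ K.val
      rw [← J.2.2.2, ← K.2.2.2, h]
      exact lowerBounds_mono_set (upperBounds_mono_set hsK)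

lemma isGLB_principalCut_iff {s : Set M} {c : M} :
    IsGLB (principalCut '' s) (principalCut c) ↔ IsGLB s c := by
  rw [isGLB_image_principalCut_iff, isGLB_iff_le_iff, Set.ext_iff]
  rfl

lemma isLUB_principalCut_iff {s : Set M} {c : M} :
    IsLUB (principalCut '' s) (principalCut c) ↔ IsLUB s c := by
  rw [isLUB_image_principalCut_iff, isLUB_iff_le_iff, Set.ext_iff]
  show (∀ u, u ∈ upperBounds (Iic c) ↔ _) ↔ _
  rw [upperBounds_Iic]
  rfl

lemma exists_isGLB_pair {a b z : M} (ha : z ≤ a) (hb : z ≤ b) :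
    ∃ J : DMC M, IsGLB {principalCut a, principalCut b} J := by
  rw [← image_pair]
  exact ⟨⟨_, isCut_lowerBounds (insert_nonempty a {b}) ⟨z, by simp [ha, hb]⟩⟩,
    isGLB_image_principalCut_iff.2 rfl⟩

lemma exists_isLUB_pair {a b u : M} (ha : a ≤ u) (hb : b ≤ u) :
    ∃ J : DMC M, IsLUB {principalCut a, principalCut b} J := by
  rw [← image_pair]
  have hub : (upperBounds {a, b}).Nonempty := ⟨u, by simp [ha, hb]⟩
  exact ⟨⟨_, isCut_lowerBounds hub ⟨a, fun v hv => hv (mem_insert a {b})⟩⟩,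
    isLUB_image_principalCut_iff.2 (gc_upperBounds_lowerBounds.l_u_l_eq_l _)⟩

lemma mem_MPlus_of_isGLB_pair {a b : M} {J : DMC M}
    (h : IsGLB {principalCut a, principalCut b} J) : J ∈ MPlus M := by
  by_cases hab : a ≤ b
  · rw [← image_pair, isGLB_image_principalCut_iff, lowerBounds_insert, lowerBounds_singleton,
      inter_eq_left.2 (Iic_subset_Iic.2 hab)] at h
    exact Or.inl (Or.inl ⟨a, Subtype.ext h.symm⟩)
  by_cases hba : b ≤ a
  · rw [← image_pair, isGLB_image_principalCut_iff, lowerBounds_insert, lowerBounds_singleton,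
      inter_eq_right.2 (Iic_subset_Iic.2 hba)] at h
    exact Or.inl (Or.inl ⟨b, Subtype.ext h.symm⟩)
  exact Or.inl (Or.inr ⟨a, b, hab, hba, h⟩)

lemma mem_MPlus_of_isLUB_pair {a b : M} {J : DMC M}
    (h : IsLUB {principalCut a, principalCut b} J) : J ∈ MPlus M := by
  by_cases hab : a ≤ b
  · rw [← image_pair, isLUB_image_principalCut_iff, upperBounds_insert, upperBounds_singleton,
      inter_eq_right.2 (Ici_subset_Ici.2 hab)] at h
    refine Or.inl (Or.inl ⟨b, Subtype.ext ?_⟩)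
    rw [← J.2.2.2, h, lowerBounds_Ici]
    rfl
  by_cases hba : b ≤ a
  · rw [← image_pair, isLUB_image_principalCut_iff, upperBounds_insert, upperBounds_singleton,
      inter_eq_left.2 (Ici_subset_Ici.2 hba)] at h
    refine Or.inl (Or.inl ⟨a, Subtype.ext ?_⟩)
    rw [← J.2.2.2, h, lowerBounds_Ici]
    rfl
  exact Or.inr ⟨a, b, hab, hba, h⟩

lemma exists_mem_not_le_of_principalCut_lt {x : M} {J : DMC M} (h : principalCut x < J) :
    ∃ z ∈ J.val, ¬z ≤ x :=
  not_subset.1 h.not_ge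

lemma exists_mem_upperBounds_not_le_of_lt_principalCut {y : M} {J : DMC M}
    (h : J < principalCut y) : ∃ u ∈ upperBounds J.val, ¬y ≤ u := by
  by_contra! hy
  refine h.not_ge (principalCut_le_iff.2 ?_)
  rw [← J.2.2.2]
  exact hy

lemma principalCut_lt_of_notMem_principalSet {J : DMC M} (hJ : J ∉ principalSet M) {x : M}
    (hx : x ∈ J.val) : principalCut x < J :=
  lt_of_le_of_ne (principalCut_le_iff.2 hx) fun h => hJ ⟨x, h⟩

lemma lt_principalCut_of_notMem_principalSet {J : DMC M} (hJ : J ∉ principalSet M) {u : M}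
    (hu : u ∈ upperBounds J.val) : J < principalCut u :=
  lt_of_le_of_ne (le_principalCut_iff.2 hu) fun h => hJ ⟨u, h.symm⟩

lemma lt_of_notMem_principalSet {J : DMC M} (hJ : J ∉ principalSet M) {x u : M}
    (hx : x ∈ J.val) (hu : u ∈ upperBounds J.val) : x < u :=
  principalCut_lt_principalCut.1 ((principalCut_lt_of_notMem_principalSet hJ hx).trans
    (lt_principalCut_of_notMem_principalSet hJ hu))

end Cuts

section OnePlusIntPlusOne

local notation "ℤ̄" => WithBot (WithTop ℤ)

lemma exists_isGreatest_of_subset_Iic {S : Set ℤ̄} (hS : S.Nonempty) {b : ℤ̄}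
    (hSb : S ⊆ Iic b) (hb : b ≠ ⊤) : ∃ m, IsGreatest S m := by
  obtain ⟨N, hN⟩ : ∃ N : ℤ, b ≤ ((N : WithTop ℤ) : ℤ̄) := by
    induction b using WithBot.recBotCoe with
    | bot => exact ⟨0, bot_le⟩
    | coe t =>
      induction t using WithTop.recTopCoe with
      | top => exact absurd rfl hb
      | coe N => exact ⟨N, le_rfl⟩
  have hS_int : ∀ s ∈ S, s = ⊥ ∨ ∃ n : ℤ, s = ((n : WithTop ℤ) : ℤ̄) := by
    intro s hs
    induction s using WithBot.recBotCoe with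
    | bot => exact Or.inl rfl
    | coe t =>
      induction t using WithTop.recTopCoe with
      | top => exact absurd ((hSb hs).trans hN) (by simp)
      | coe n => exact Or.inr ⟨n, rfl⟩
  by_cases hT : ∃ n : ℤ, ((n : WithTop ℤ) : ℤ̄) ∈ S
  · obtain ⟨m, hmS, hm⟩ := Int.exists_greatest_of_bdd
      ⟨N, fun n hn => by exact_mod_cast (hSb hn).trans hN⟩ hT
    refine ⟨_, hmS, fun s hs => ?_⟩
    rcases hS_int s hs with rfl | ⟨n, rfl⟩
    · exact bot_le
    · exact_mod_cast hm n hs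
  · have hS_bot : ∀ s ∈ S, s = ⊥ := fun s hs =>
      (hS_int s hs).resolve_right fun ⟨n, hn⟩ => hT ⟨n, hn ▸ hs⟩
    obtain ⟨s, hs⟩ := hS
    exact ⟨⊥, hS_bot s hs ▸ hs, fun t ht => (hS_bot t ht).le⟩

lemma exists_isLeast_of_subset_Ici {S : Set ℤ̄} (hS : S.Nonempty) {b : ℤ̄}
    (hSb : S ⊆ Ici b) (hb : b ≠ ⊥) : ∃ m, IsLeast S m := by
  obtain ⟨N, hN⟩ : ∃ N : ℤ, ((N : WithTop ℤ) : ℤ̄) ≤ b := by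
    induction b using WithBot.recBotCoe with
    | bot => exact absurd rfl hb
    | coe t =>
      induction t using WithTop.recTopCoe with
      | top => exact ⟨0, le_top⟩
      | coe N => exact ⟨N, le_rfl⟩
  have hS_int : ∀ s ∈ S, s = ⊤ ∨ ∃ n : ℤ, s = ((n : WithTop ℤ) : ℤ̄) := by
    intro s hs
    induction s using WithBot.recBotCoe with
    | bot => exact absurd (hN.trans (hSb hs)) (by simp)
    | coe t =>
      induction t using WithTop.recTopCoe with
      | top => exact Or.inl rfl
      | coe n => exact Or.inr ⟨n, rfl⟩
  by_cases hT : ∃ n : ℤ, ((n : WithTop ℤ) : ℤ̄) ∈ S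
  · obtain ⟨m, hmS, hm⟩ := Int.exists_least_of_bdd
      ⟨N, fun n hn => by exact_mod_cast hN.trans (hSb hn)⟩ hT
    refine ⟨_, hmS, fun s hs => ?_⟩
    rcases hS_int s hs with rfl | ⟨n, rfl⟩
    · exact le_top
    · exact_mod_cast hm n hs
  · have hS_top : ∀ s ∈ S, s = ⊤ := fun s hs =>
      (hS_int s hs).resolve_right fun ⟨n, hn⟩ => hT ⟨n, hn ▸ hs⟩
    obtain ⟨s, hs⟩ := hS
    exact ⟨⊤, hS_top s hs ▸ hs, fun t ht => (hS_top t ht).ge⟩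

variable {P : Type*} [Preorder P] {C S : Set P}

lemma exists_isGreatest_of_orderIso (φ : C ≃o ℤ̄) (hSC : S ⊆ C) (hS : S.Nonempty) {b c : P}
    (hb : b ∈ C) (hc : c ∈ C) (hSb : S ⊆ Iic b) (hbc : b < c) : ∃ m, IsGreatest S m := by
  have hφb : φ ⟨b, hb⟩ ≠ ⊤ := ne_top_of_lt (φ.lt_iff_lt.2 (show (⟨b, hb⟩ : C) < ⟨c, hc⟩ from hbc))
  obtain ⟨_, ⟨⟨m, _⟩, hmS, rfl⟩, hm⟩ := exists_isGreatest_of_subset_Iic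
    (S := φ '' {p : C | p.1 ∈ S}) (by obtain ⟨s, hs⟩ := hS; exact ⟨_, ⟨⟨s, hSC hs⟩, hs, rfl⟩⟩)
    (by rintro _ ⟨p, hp, rfl⟩; exact φ.le_iff_le.2 (hSb hp)) hφb
  exact ⟨m, hmS, fun s hs => φ.le_iff_le.1 (hm ⟨⟨s, hSC hs⟩, hs, rfl⟩)⟩

lemma exists_isLeast_of_orderIso (φ : C ≃o ℤ̄) (hSC : S ⊆ C) (hS : S.Nonempty) {b c : P}
    (hb : b ∈ C) (hc : c ∈ C) (hSb : S ⊆ Ici b) (hcb : c < b) : ∃ m, IsLeast S m := by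
  have hφb : φ ⟨b, hb⟩ ≠ ⊥ := ne_bot_of_gt (φ.lt_iff_lt.2 (show (⟨c, hc⟩ : C) < ⟨b, hb⟩ from hcb))
  obtain ⟨_, ⟨⟨m, _⟩, hmS, rfl⟩, hm⟩ := exists_isLeast_of_subset_Ici
    (S := φ '' {p : C | p.1 ∈ S}) (by obtain ⟨s, hs⟩ := hS; exact ⟨_, ⟨⟨s, hSC hs⟩, hs, rfl⟩⟩)
    (by rintro _ ⟨p, hp, rfl⟩; exact φ.le_iff_le.2 (hSb hp)) hφb
  exact ⟨m, hmS, fun s hs => φ.le_iff_le.1 (hm ⟨⟨s, hSC hs⟩, hs, rfl⟩)⟩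

end OnePlusIntPlusOne

lemma SimpleGraph.Iso.adj_symm_apply_iff {V : Type*} {G : SimpleGraph V} (g : G ≃g G) {z w : V} :
    G.Adj (g.symm z) w ↔ G.Adj z (g w) := by
  rw [← g.map_adj_iff, g.apply_symm_apply]

section TwoLevel

variable {M : Type*} [PartialOrder M]

lemma IsTwoLevel.isMin_of_lt (h : IsTwoLevel M) {x y : M} (hxy : x < y) : IsMin x :=
  (h x).resolve_right fun hx => hx.not_lt hxy

lemma IsTwoLevel.isMax_of_lt (h : IsTwoLevel M) {x y : M} (hxy : x < y) : IsMax y :=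
  (h y).resolve_left fun hy => hy.not_lt hxy

lemma IsMin.lt_of_compGraph_adj {x y : M} (hx : IsMin x) (h : (compGraph M).Adj y x) : x < y :=
  Or.resolve_left h hx.not_lt

lemma IsMax.lt_of_compGraph_adj {x y : M} (hx : IsMax x) (h : (compGraph M).Adj y x) : y < x :=
  Or.resolve_right h hx.not_lt

def EdgesOnFourCycles (M : Type*) [PartialOrder M] : Prop :=
  ∀ x y : M, x < y → ∃ x' y', x' ≠ x ∧ y' ≠ y ∧ x' < y ∧ x < y' ∧ x' < y'

lemma edgesOnFourCycles_of_exists_cut_between (h2lev : IsTwoLevel M)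
    (h : ∀ x y : M, x < y → ∃ q : DMC M, principalCut x < q ∧ q < principalCut y) :
    EdgesOnFourCycles M := by
  intro x y hxy
  obtain ⟨q, hxq, hqy⟩ := h x y hxy
  obtain ⟨x', hx'q, hx'x⟩ := exists_mem_not_le_of_principalCut_lt hxq
  obtain ⟨y', hy'q, hyy'⟩ := exists_mem_upperBounds_not_le_of_lt_principalCut hqy
  have hx'y : x' < y :=
    lt_of_le_of_ne (le_principalCut_iff.1 hqy.le hx'q) fun h => hyy' (h ▸ hy'q hx'q)
  have hxy' : x ≤ y' := hy'q (principalCut_le_iff.1 hxq.le)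
  refine ⟨x', y', fun h => hx'x h.le, fun h => hyy' h.ge, hx'y,
    lt_of_le_of_ne hxy' fun h => hx'x (h ▸ hy'q hx'q), lt_of_le_of_ne (hy'q hx'q) ?_⟩
  rintro rfl
  exact hx'x ((h2lev.isMin_of_lt hx'y) hxy')

def HasIntegerIntervals (M : Type*) [PartialOrder M] : Prop :=
  ∀ x y : M, x ∈ minSet M → y ∈ maxSet M → x < y →
    Nonempty (↥(MPlus M ∩ Icc (principalCut x) (principalCut y)) ≃o WithBot (WithTop ℤ))

lemma HasIntegerIntervals.exists_cut_between (hint : HasIntegerIntervals M)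
    (h2lev : IsTwoLevel M) {x y : M} (hxy : x < y) :
    ∃ q : DMC M, principalCut x < q ∧ q < principalCut y := by
  obtain ⟨φ⟩ := hint x y (h2lev.isMin_of_lt hxy) (h2lev.isMax_of_lt hxy) hxy
  refine ⟨(φ.symm ((0 : ℤ) : WithTop ℤ)).1, (φ.symm ⊥).2.2.1.trans_lt ?_,
    lt_of_lt_of_le ?_ (φ.symm ⊤).2.2.2⟩
  · exact φ.symm.lt_iff_lt.2 (WithBot.bot_lt_coe _)
  · exact φ.symm.lt_iff_lt.2 (WithBot.coe_lt_coe.2 (WithTop.coe_lt_top 0))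

lemma HasIntegerIntervals.edgesOnFourCycles (hint : HasIntegerIntervals M)
    (h2lev : IsTwoLevel M) : EdgesOnFourCycles M :=
  edgesOnFourCycles_of_exists_cut_between h2lev fun _ _ => hint.exists_cut_between h2lev

lemma EdgesOnFourCycles.not_isLUB_pair (hsq : EdgesOnFourCycles M) (h2lev : IsTwoLevel M)
    (h2arc : LocallyTwoArcTransitive (compGraph M)) {a b c : M} (hab : ¬a ≤ b) (hba : ¬b ≤ a) :
    ¬IsLUB {a, b} c := by
  intro h
  have hac : a < c := lt_of_le_of_ne (h.1 (mem_insert a {b}))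
    fun hac => hba (hac ▸ h.1 (mem_insert_of_mem a rfl))
  have hbc : b < c := lt_of_le_of_ne (h.1 (mem_insert_of_mem a rfl))
    fun hbc => hab (hbc ▸ h.1 (mem_insert a {b}))
  obtain ⟨a', y, ha', hy, ha'c, hay, ha'y⟩ := hsq a c hac
  obtain ⟨g, hga, hgc, hgb⟩ := h2arc a c b c a' ⟨Or.inl hac, Or.inr hbc, fun h => hab h.le⟩
    ⟨Or.inl hac, Or.inr ha'c, ha'.symm⟩
  have hub : g.symm y ∈ upperBounds {a, b} := by
    rintro z (rfl | rfl)
    · exact ((h2lev.isMin_of_lt hac).lt_of_compGraph_adj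
        (g.adj_symm_apply_iff.2 (by rw [hga]; exact Or.inr hay))).le
    · exact ((h2lev.isMin_of_lt hbc).lt_of_compGraph_adj
        (g.adj_symm_apply_iff.2 (by rw [hgb]; exact Or.inr ha'y))).le
  have hyc : g.symm y = c := (h2lev.isMax_of_lt hac).eq_of_ge (h.2 hub)
  exact hy ((g.symm_apply_eq.1 hyc).trans hgc)

lemma EdgesOnFourCycles.not_isGLB_pair (hsq : EdgesOnFourCycles M) (h2lev : IsTwoLevel M)
    (h2arc : LocallyTwoArcTransitive (compGraph M)) {a b c : M} (hab : ¬a ≤ b) (hba : ¬b ≤ a) :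
    ¬IsGLB {a, b} c := by
  intro h
  have hca : c < a := lt_of_le_of_ne (h.1 (mem_insert a {b}))
    fun hca => hab (hca ▸ h.1 (mem_insert_of_mem a rfl))
  have hcb : c < b := lt_of_le_of_ne (h.1 (mem_insert_of_mem a rfl))
    fun hcb => hba (hcb ▸ h.1 (mem_insert a {b}))
  obtain ⟨c', y, hc', hy, hc'a, hcy, hc'y⟩ := hsq c a hca
  obtain ⟨g, hga, hgc, hgb⟩ := h2arc a c b c y ⟨Or.inr hca, Or.inl hcb, fun h => hab h.le⟩
    ⟨Or.inr hca, Or.inl hcy, hy.symm⟩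
  have hlb : g.symm c' ∈ lowerBounds {a, b} := by
    rintro z (rfl | rfl)
    · exact ((h2lev.isMax_of_lt hca).lt_of_compGraph_adj
        (g.adj_symm_apply_iff.2 (by rw [hga]; exact Or.inl hc'a))).le
    · exact ((h2lev.isMax_of_lt hcb).lt_of_compGraph_adj
        (g.adj_symm_apply_iff.2 (by rw [hgb]; exact Or.inl hc'y))).le
  have hc'c : g.symm c' = c := (h2lev.isMin_of_lt hca).eq_of_le (h.2 hlb)
  exact hc' ((g.symm_apply_eq.1 hc'c).trans hgc)

lemma exists_isLUB_pair_of_notMem_principalSet (h2lev : IsTwoLevel M)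
    (hint : HasIntegerIntervals M) {J : DMC M} (hJ : J ∉ principalSet M) {x₁ y₀ : M}
    (hx₁ : x₁ ∈ J.val) (hy₀ : y₀ ∈ upperBounds J.val) :
    ∃ x ∈ J.val, IsLUB {principalCut x₁, principalCut x} J := by
  have hx₁y₀ : x₁ < y₀ := lt_of_notMem_principalSet hJ hx₁ hy₀
  obtain ⟨u, hu, hy₀u⟩ := exists_mem_upperBounds_not_le_of_lt_principalCut
    (lt_principalCut_of_notMem_principalSet hJ hy₀)
  obtain ⟨φ⟩ := hint x₁ y₀ (h2lev.isMin_of_lt hx₁y₀) (h2lev.isMax_of_lt hx₁y₀) hx₁y₀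
  obtain ⟨b, hb⟩ := exists_isGLB_pair (hy₀ hx₁) (hu hx₁)
  have hJb : J ≤ b := hb.2 (by
    rintro _ (rfl | rfl)
    exacts [le_principalCut_iff.2 hy₀, le_principalCut_iff.2 hu])
  have hby₀ : b < principalCut y₀ := lt_of_le_of_ne (hb.1 (mem_insert _ _)) fun h =>
    hy₀u (principalCut_le_principalCut.1 (h ▸ hb.1 (mem_insert_of_mem _ rfl)))
  set S := {p : DMC M | ∃ x ∈ J.val, IsLUB {principalCut x₁, principalCut x} p}
  have hSJ : ∀ p ∈ S, p ≤ J := by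
    rintro p ⟨x, hx, hp⟩
    refine hp.2 ?_
    rintro _ (rfl | rfl)
    exacts [principalCut_le_iff.2 hx₁, principalCut_le_iff.2 hx]
  have hS : ∀ x ∈ J.val, ∃ p ∈ S, principalCut x ≤ p := fun x hx =>
    let ⟨p, hp⟩ := exists_isLUB_pair (hy₀ hx₁) (hy₀ hx)
    ⟨p, ⟨x, hx, hp⟩, hp.1 (mem_insert_of_mem _ rfl)⟩
  have hSC : S ⊆ MPlus M ∩ Icc (principalCut x₁) (principalCut y₀) := by
    rintro p ⟨x, hx, hp⟩
    exact ⟨mem_MPlus_of_isLUB_pair hp, hp.1 (mem_insert _ _),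
      (hSJ p ⟨x, hx, hp⟩).trans (le_principalCut_iff.2 hy₀)⟩
  obtain ⟨m, ⟨xₛ, hxₛ, hm⟩, hmax⟩ := exists_isGreatest_of_orderIso φ hSC
    (let ⟨p, hp, _⟩ := hS x₁ hx₁; ⟨p, hp⟩)
    ⟨mem_MPlus_of_isGLB_pair hb, (principalCut_le_iff.2 hx₁).trans hJb, hby₀.le⟩
    ⟨Or.inl (Or.inl ⟨y₀, rfl⟩), principalCut_le_principalCut.2 hx₁y₀.le, le_rfl⟩
    (fun p hp => (hSJ p hp).trans hJb) hby₀
  have hmJ : m = J := le_antisymm (hSJ m ⟨xₛ, hxₛ, hm⟩) fun x hx =>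
    let ⟨p, hp, hxp⟩ := hS x hx
    principalCut_le_iff.1 (hxp.trans (hmax hp))
  exact ⟨xₛ, hxₛ, hmJ ▸ hm⟩

lemma exists_isGLB_pair_of_notMem_principalSet (h2lev : IsTwoLevel M)
    (hint : HasIntegerIntervals M) {J : DMC M} (hJ : J ∉ principalSet M) {x₁ y₀ : M}
    (hx₁ : x₁ ∈ J.val) (hy₀ : y₀ ∈ upperBounds J.val) :
    ∃ u ∈ upperBounds J.val, IsGLB {principalCut y₀, principalCut u} J := by
  have hx₁y₀ : x₁ < y₀ := lt_of_notMem_principalSet hJ hx₁ hy₀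
  obtain ⟨x, hx, hxx₁⟩ := exists_mem_not_le_of_principalCut_lt
    (principalCut_lt_of_notMem_principalSet hJ hx₁)
  obtain ⟨φ⟩ := hint x₁ y₀ (h2lev.isMin_of_lt hx₁y₀) (h2lev.isMax_of_lt hx₁y₀) hx₁y₀
  obtain ⟨a, ha⟩ := exists_isLUB_pair (hy₀ hx₁) (hy₀ hx)
  have haJ : a ≤ J := ha.2 (by
    rintro _ (rfl | rfl)
    exacts [principalCut_le_iff.2 hx₁, principalCut_le_iff.2 hx])
  have hx₁a : principalCut x₁ < a := lt_of_le_of_ne (ha.1 (mem_insert _ _)) fun h =>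
    hxx₁ (principalCut_le_principalCut.1 (h ▸ ha.1 (mem_insert_of_mem _ rfl)))
  set S := {p : DMC M | ∃ u ∈ upperBounds J.val, IsGLB {principalCut y₀, principalCut u} p}
  have hJS : ∀ p ∈ S, J ≤ p := by
    rintro p ⟨u, hu, hp⟩
    refine hp.2 ?_
    rintro _ (rfl | rfl)
    exacts [le_principalCut_iff.2 hy₀, le_principalCut_iff.2 hu]
  have hS : ∀ u ∈ upperBounds J.val, ∃ p ∈ S, p ≤ principalCut u := fun u hu =>
    let ⟨p, hp⟩ := exists_isGLB_pair (hy₀ hx₁) (hu hx₁)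
    ⟨p, ⟨u, hu, hp⟩, hp.1 (mem_insert_of_mem _ rfl)⟩
  have hSC : S ⊆ MPlus M ∩ Icc (principalCut x₁) (principalCut y₀) := by
    rintro p ⟨u, hu, hp⟩
    exact ⟨mem_MPlus_of_isGLB_pair hp,
      (principalCut_le_iff.2 hx₁).trans (hJS p ⟨u, hu, hp⟩), hp.1 (mem_insert _ _)⟩
  obtain ⟨m, ⟨uₛ, huₛ, hm⟩, hmin⟩ := exists_isLeast_of_orderIso φ hSC
    (let ⟨p, hp, _⟩ := hS y₀ hy₀; ⟨p, hp⟩)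
    ⟨mem_MPlus_of_isLUB_pair ha, hx₁a.le, haJ.trans (le_principalCut_iff.2 hy₀)⟩
    ⟨Or.inl (Or.inl ⟨x₁, rfl⟩), le_rfl, principalCut_le_principalCut.2 hx₁y₀.le⟩
    (fun p hp => haJ.trans (hJS p hp)) hx₁a
  have hmJ : m = J := by
    refine le_antisymm ?_ (hJS m ⟨uₛ, huₛ, hm⟩)
    show m.val ⊆ J.val
    rw [← J.2.2.2]
    intro z hz u hu
    obtain ⟨p, hp, hpu⟩ := hS u hu
    exact ((hmin hp).trans hpu) hz
  exact ⟨uₛ, huₛ, hmJ ▸ hm⟩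

lemma mem_downRam_of_notMem_principalSet (h2lev : IsTwoLevel M) (hint : HasIntegerIntervals M)
    {J : DMC M} (hJ : J ∉ principalSet M) : J ∈ downRam M := by
  obtain ⟨x₁, hx₁⟩ := J.2.1
  obtain ⟨y₀, hy₀⟩ := J.2.2.1
  obtain ⟨x, hx, hJx⟩ := exists_isLUB_pair_of_notMem_principalSet h2lev hint hJ hx₁ hy₀
  have hxx₁ : x ≠ x₁ := by
    rintro rfl
    rw [pair_eq_singleton] at hJx
    exact hJ ⟨x, isLUB_singleton.unique hJx⟩
  have hx₁_min : IsMin x₁ := h2lev.isMin_of_lt (lt_of_notMem_principalSet hJ hx₁ hy₀)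
  have hx_min : IsMin x := h2lev.isMin_of_lt (lt_of_notMem_principalSet hJ hx hy₀)
  exact ⟨x₁, x, fun h => hxx₁ (hx_min.eq_of_ge h), fun h => hxx₁ (hx₁_min.eq_of_le h), hJx⟩

lemma mem_upRam_of_notMem_principalSet (h2lev : IsTwoLevel M) (hint : HasIntegerIntervals M)
    {J : DMC M} (hJ : J ∉ principalSet M) : J ∈ upRam M := by
  obtain ⟨x₁, hx₁⟩ := J.2.1
  obtain ⟨y₀, hy₀⟩ := J.2.2.1
  obtain ⟨u, hu, hJu⟩ := exists_isGLB_pair_of_notMem_principalSet h2lev hint hJ hx₁ hy₀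
  have huy₀ : u ≠ y₀ := by
    rintro rfl
    rw [pair_eq_singleton] at hJu
    exact hJ ⟨u, isGLB_singleton.unique hJu⟩
  have hy₀_max : IsMax y₀ := h2lev.isMax_of_lt (lt_of_notMem_principalSet hJ hx₁ hy₀)
  have hu_max : IsMax u := h2lev.isMax_of_lt (lt_of_notMem_principalSet hJ hx₁ hu)
  exact ⟨y₀, u, fun h => huy₀ (hy₀_max.eq_of_le h).symm, fun h => huy₀ (hu_max.eq_of_le h), hJu⟩

lemma upRam_eq_compl_principalSet (h2lev : IsTwoLevel M)
    (h2arc : LocallyTwoArcTransitive (compGraph M)) (hint : HasIntegerIntervals M) :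
    upRam M = (principalSet M)ᶜ := by
  ext J
  refine ⟨?_, mem_upRam_of_notMem_principalSet h2lev hint⟩
  rintro ⟨a, b, hab, hba, h⟩ ⟨c, rfl⟩
  rw [← image_pair, isGLB_principalCut_iff] at h
  exact (hint.edgesOnFourCycles h2lev).not_isGLB_pair h2lev h2arc hab hba h

lemma downRam_eq_compl_principalSet (h2lev : IsTwoLevel M)
    (h2arc : LocallyTwoArcTransitive (compGraph M)) (hint : HasIntegerIntervals M) :
    downRam M = (principalSet M)ᶜ := by
  ext J
  refine ⟨?_, mem_downRam_of_notMem_principalSet h2lev hint⟩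
  rintro ⟨a, b, hab, hba, h⟩ ⟨c, rfl⟩
  rw [← image_pair, isLUB_principalCut_iff] at h
  exact (hint.edgesOnFourCycles h2lev).not_isLUB_pair h2lev h2arc hab hba h

end TwoLevel

theorem ram_structure_of_Z_intervals_general (M : Type*) [PartialOrder M]
    (h2lev : IsTwoLevel M)
    (h2arc : LocallyTwoArcTransitive (compGraph M))
    (hint : ∀ x y : M, x ∈ minSet M → y ∈ maxSet M → x < y →
      Nonempty (↥(MPlus M ∩ Set.Icc (principalCut x) (principalCut y)) ≃o
        WithBot (WithTop ℤ))) :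
    upRam M = downRam M ∧
    upRam M = MPlus M \ principalSet M ∧
    MPlus M \ principalSet M = (principalSet M)ᶜ ∧
    MPlus M = Set.univ ∧
    principalSet M ∩ (upRam M ∪ downRam M) = ∅ := by
  have hup := upRam_eq_compl_principalSet h2lev h2arc hint
  have hdown := downRam_eq_compl_principalSet h2lev h2arc hint
  have hplus : MPlus M = univ := by
    rw [MPlus, hup, hdown, union_compl_self, univ_union]
  refine ⟨hup.trans hdown.symm, ?_, ?_, hplus, ?_⟩
  · rw [hplus, hup, compl_eq_univ_sdiff]
  · rw [hplus, compl_eq_univ_sdiff]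
  · rw [hup, hdown, union_self, inter_compl_self]

/-- If `M` is a countable 2-level poset with connected, locally
2-arc-transitive comparability graph, all of whose intervals `[x,y]^{M⁺}` are isomorphic to
`1 + ℤ + 1`, then `↑Ram(M) = ↓Ram(M) = M⁺ \ M = M^D \ M`; in particular `M⁺ = M^D` and no
element of `M` is a ramification point. -/
theorem ram_structure_of_Z_intervals (M : Type*) [PartialOrder M] [Countable M]
    (h2lev : IsTwoLevel M)
    (hconn : (compGraph M).Connected)
    (h2arc : LocallyTwoArcTransitive (compGraph M))
    (hint : ∀ x y : M, x ∈ minSet M → y ∈ maxSet M → x < y →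
      Nonempty (↥(MPlus M ∩ Set.Icc (principalCut x) (principalCut y)) ≃o
        WithBot (WithTop ℤ))) :
    upRam M = downRam M ∧
    upRam M = MPlus M \ principalSet M ∧
    MPlus M \ principalSet M = (principalSet M)ᶜ ∧
    MPlus M = Set.univ ∧
    principalSet M ∩ (upRam M ∪ downRam M) = ∅ :=
  ram_structure_of_Z_intervals_general M h2lev h2arc hint
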